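/- arXiv:2512.05912 — 3 statements merged into one kernel-verified Lean document; each statement's English description precedes it below -/
import Mathlib

section
/- Let K be a field and let (C•, d) be a cochain complex of K-vector spaces indexed by the natural numbers, with linear differentials d : Cᵏ → Cᵏ⁺¹ satisfying d ∘ d = 0. For each k let Uᵏ ⊆ Cᵏ be a linear subspace such that every u ∈ Uᵏ with d u = 0 satisfies u = 0. Define W⁰ = U⁰ and Wᵏ = d(Uᵏ⁻¹) + Uᵏ for k ≥ 1. Then d maps Wᵏ into Wᵏ⁺¹ for every k, and the resulting complex W• is exact in the strong sense: W⁰ ∩ ker d = {0}, and for every k ≥ 1, Wᵏ ∩ ker d = d(Wᵏ⁻¹). -/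
/-- In a cochain complex of `K`-vector spaces, if each subspace `Uᵏ` contains no nonzero
closed form, and `W⁰ = U⁰`, `Wᵏ⁺¹ = d(Uᵏ) + Uᵏ⁺¹`, then `d` maps `Wᵏ` into `Wᵏ⁺¹` and the
complex `W•` is exact in the strong sense: `W⁰ ∩ ker d = 0` and
`Wᵏ⁺¹ ∩ ker d = d(Wᵏ)` for every `k`. -/
theorem w_complex_exact
    {K : Type*} [Field K] {C : ℕ → Type*}
    [∀ k, AddCommGroup (C k)] [∀ k, Module K (C k)]
    (d : ∀ k, C k →ₗ[K] C (k + 1))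
    (hdd : ∀ k (x : C k), d (k + 1) (d k x) = 0)
    (U : ∀ k, Submodule K (C k))
    (hU : ∀ k, ∀ u ∈ U k, d k u = 0 → u = 0)
    (W : ∀ k, Submodule K (C k))
    (hW0 : W 0 = U 0)
    (hWsucc : ∀ k, W (k + 1) = (U k).map (d k) ⊔ U (k + 1)) :
    (∀ k, (W k).map (d k) ≤ W (k + 1)) ∧
      W 0 ⊓ LinearMap.ker (d 0) = ⊥ ∧
      ∀ k, W (k + 1) ⊓ LinearMap.ker (d (k + 1)) = (W k).map (d k) := by
  have hUW : ∀ k, U k ≤ W k := by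
    intro k
    cases k with
    | zero => rw [hW0]
    | succ n => rw [hWsucc]; exact le_sup_right
  have hmap : ∀ k, (W k).map (d k) ≤ W (k + 1) := by
    intro k
    cases k with
    | zero =>
      rw [hW0, hWsucc]
      exact le_sup_left
    | succ n =>
      rw [hWsucc n, hWsucc (n + 1)]
      rintro _ ⟨x, hx, rfl⟩
      rcases Submodule.mem_sup.mp hx with ⟨a, ha, b, hb, rfl⟩
      rcases ha with ⟨u, hu, rfl⟩
      have h1 : d (n + 1) (d n u + b) = d (n + 1) b := by
        rw [map_add, hdd n u, zero_add]
      rw [h1]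
      exact le_sup_left (a := (U (n + 1)).map (d (n + 1))) (Submodule.mem_map.mpr ⟨b, hb, rfl⟩)
  refine ⟨hmap, ?_, ?_⟩
  · ext x
    simp only [Submodule.mem_inf, Submodule.mem_bot, LinearMap.mem_ker, hW0]
    exact ⟨fun ⟨h1, h2⟩ => hU 0 x h1 h2, by rintro rfl; simp⟩
  · intro k
    apply le_antisymm
    · intro x hx
      rw [Submodule.mem_inf] at hx
      obtain ⟨hxW, hker⟩ := hx
      rw [hWsucc k] at hxW
      rcases Submodule.mem_sup.mp hxW with ⟨a, ha, b, hb, rfl⟩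
      rcases ha with ⟨u, hu, rfl⟩
      rw [LinearMap.mem_ker, map_add, hdd k u, zero_add] at hker
      have hb0 : b = 0 := hU (k + 1) b hb hker
      subst hb0
      rw [add_zero]
      exact Submodule.mem_map.mpr ⟨u, hUW k hu, rfl⟩
    · rintro _ ⟨x, hx, rfl⟩
      exact Submodule.mem_inf.mpr ⟨hmap k (Submodule.mem_map.mpr ⟨x, hx, rfl⟩),
        LinearMap.mem_ker.mpr (hdd k x)⟩
end

section
/- Let H and K be real Hilbert spaces, let d : H → K be a continuous linear map, and set W = ker d. Let B_H : H × H → ℝ be a symmetric bilinear form and c₁, c₂ > 0 constants with c₁‖x‖² ≤ B_H(x,x) ≤ c₂‖x‖² for all x ∈ H, and let B_K : K × K → ℝ be a bilinear form and k₁ > 0 a constant with k₁‖y‖² ≤ B_K(y,y) for all y ∈ K. Assume the Poincaré–Friedrichs inequality holds on the orthogonal complement of W: there is C > 0 such that ‖v‖ ≤ C·‖d v‖ for all v ∈ Wᗮ. Then for every u ∈ H satisfying B_H(u, w) = 0 for all w ∈ W, one has B_H(u,u) ≤ (c₂ C² / k₁)·B_K(d u, d u). -/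
/-!
Split `u = v + w` with `w` the orthogonal projection of `u` onto `W = ker d`, so `v ∈ Wᗮ` and
`d v = d u`. Since `u` is `B_H`-orthogonal to `W`, the Pythagorean identity for `B_H` gives
`B_H(u,u) ≤ B_H(u,u) + B_H(w,w) = B_H(v,v)`, and then
`B_H(v,v) ≤ c₂‖v‖² ≤ c₂C²‖d v‖² ≤ (c₂C²/k₁) B_K(d v, d v)`.
-/

theorem LinearMap.apply_sub_self_of_apply_eq_zero {R M N : Type*} [CommRing R]
    [AddCommGroup M] [Module R M] [AddCommGroup N] [Module R N]
    (B : M →ₗ[R] M →ₗ[R] N) {u w : M} (huw : B u w = 0) (hwu : B w u = 0) :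
    B (u - w) (u - w) = B u u + B w w := by
  simp only [map_sub, LinearMap.sub_apply, huw, hwu]
  abel

theorem poincare_friedrichs_discrete_general
    {H K : Type*}
    [NormedAddCommGroup H] [InnerProductSpace ℝ H] [CompleteSpace H]
    [NormedAddCommGroup K] [InnerProductSpace ℝ K]
    (d : H →L[ℝ] K)
    (B_H : H →ₗ[ℝ] H →ₗ[ℝ] ℝ) (B_K : K →ₗ[ℝ] K →ₗ[ℝ] ℝ)
    (hsymm : ∀ x y : H, B_H x y = B_H y x)
    {c₁ c₂ k₁ C : ℝ} (hc₁ : 0 < c₁) (hc₂ : 0 < c₂) (hk₁ : 0 < k₁)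
    (hBH_low : ∀ x : H, c₁ * ‖x‖ ^ 2 ≤ B_H x x)
    (hBH_up : ∀ x : H, B_H x x ≤ c₂ * ‖x‖ ^ 2)
    (hBK_low : ∀ y : K, k₁ * ‖y‖ ^ 2 ≤ B_K y y)
    (hPF : ∀ v ∈ (LinearMap.ker (d : H →ₗ[ℝ] K))ᗮ, ‖v‖ ≤ C * ‖d v‖) :
    ∀ u : H, (∀ w ∈ LinearMap.ker (d : H →ₗ[ℝ] K), B_H u w = 0) →
      B_H u u ≤ (c₂ * C ^ 2 / k₁) * B_K (d u) (d u) := by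
  intro u hu
  set W := LinearMap.ker (d : H →ₗ[ℝ] K)
  have : CompleteSpace W := (ContinuousLinearMap.isClosed_ker d).completeSpace_coe
  set w := W.starProjection u
  have hwW : w ∈ W := W.starProjection_apply_mem u
  have hdv : d (u - w) = d u := by rw [map_sub, show d w = 0 from hwW, sub_zero]
  have huw : B_H u w = 0 := hu w hwW
  have hww : 0 ≤ B_H w w := le_trans (by positivity) (hBH_low w)
  have hdu : ‖d u‖ ^ 2 ≤ B_K (d u) (d u) / k₁ := by
    rw [le_div_iff₀ hk₁, mul_comm]
    exact hBK_low (d u)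
  calc B_H u u ≤ B_H u u + B_H w w := le_add_of_nonneg_right hww
    _ = B_H (u - w) (u - w) :=
        (B_H.apply_sub_self_of_apply_eq_zero huw (hsymm w u ▸ huw)).symm
    _ ≤ c₂ * ‖u - w‖ ^ 2 := hBH_up _
    _ ≤ c₂ * (C * ‖d u‖) ^ 2 := by
        gcongr
        exact hdv ▸ hPF _ (W.sub_starProjection_mem_orthogonal u)
    _ ≤ c₂ * C ^ 2 * (B_K (d u) (d u) / k₁) := by
        rw [mul_pow, ← mul_assoc]
        gcongr
    _ = (c₂ * C ^ 2 / k₁) * B_K (d u) (d u) := by ring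

/-- Poincaré–Friedrichs inequality with respect to equivalent discrete inner products:
if `B_H` is a symmetric bilinear form equivalent to the squared norm on `H`, `B_K` is
bounded below by the squared norm on `K`, and the Poincaré–Friedrichs inequality
`‖v‖ ≤ C‖d v‖` holds on `(ker d)ᗮ`, then every `u` that is `B_H`-orthogonal to
`ker d` satisfies `B_H(u,u) ≤ (c₂ C²/k₁)·B_K(d u, d u)`. -/
theorem poincare_friedrichs_discrete
    {H K : Type*}
    [NormedAddCommGroup H] [InnerProductSpace ℝ H] [CompleteSpace H]
    [NormedAddCommGroup K] [InnerProductSpace ℝ K] [CompleteSpace K]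
    (d : H →L[ℝ] K)
    (B_H : H →ₗ[ℝ] H →ₗ[ℝ] ℝ) (B_K : K →ₗ[ℝ] K →ₗ[ℝ] ℝ)
    (hsymm : ∀ x y : H, B_H x y = B_H y x)
    {c₁ c₂ k₁ C : ℝ} (hc₁ : 0 < c₁) (hc₂ : 0 < c₂) (hk₁ : 0 < k₁) (hC : 0 < C)
    (hBH_low : ∀ x : H, c₁ * ‖x‖ ^ 2 ≤ B_H x x)
    (hBH_up : ∀ x : H, B_H x x ≤ c₂ * ‖x‖ ^ 2)
    (hBK_low : ∀ y : K, k₁ * ‖y‖ ^ 2 ≤ B_K y y)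
    (hPF : ∀ v ∈ (LinearMap.ker (d : H →ₗ[ℝ] K))ᗮ, ‖v‖ ≤ C * ‖d v‖) :
    ∀ u : H, (∀ w ∈ LinearMap.ker (d : H →ₗ[ℝ] K), B_H u w = 0) →
      B_H u u ≤ (c₂ * C ^ 2 / k₁) * B_K (d u) (d u) :=
  poincare_friedrichs_discrete_general d B_H B_K hsymm hc₁ hc₂ hk₁ hBH_low hBH_up hBK_low hPF
end

section
/- Let H be a real Hilbert space, H₀ ⊆ H a finite-dimensional subspace, and B : H₀ × H₀ → ℝ a symmetric bilinear form with constants c₁, c₂ > 0 such that c₁‖x‖² ≤ B(x,x) ≤ c₂‖x‖² for all x ∈ H₀. Let Q : H → H₀ satisfy B(Q t, t') = ⟨t, t'⟩ for all t ∈ H and t' ∈ H₀. Let W be a closed subspace of H, P the orthogonal projection of H onto Wᗮ, and W_h a subspace of W ∩ H₀. Suppose u, v ∈ H₀ satisfy: u − v ∈ W_h; B(u, w) = 0 for all w ∈ W_h; and ⟨v, w⟩ = 0 for all w ∈ W_h. Then ‖u − v‖ ≤ √(c₂/c₁) · ( ‖Q(P u) − P u‖ + ‖P v − v‖ ). -/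
open scoped RealInnerProductSpace

/-- Quantitative vanishing-gap estimate: let `H₀` be a finite-dimensional subspace of a
real Hilbert space `H`, `B` a symmetric bilinear form on `H₀` with
`c₁‖x‖² ≤ B(x,x) ≤ c₂‖x‖²`, and `Q : H → H₀` the Riesz-type map with
`B(Q t, t') = ⟨t, t'⟩`. Let `W` be a closed subspace, `W_h ⊆ W ∩ H₀`, and let
`pu, pv ∈ Wᗮ` with `u - pu ∈ W`, `v - pv ∈ W` (so `pu = P u`, `pv = P v`). If
`u - v ∈ W_h`, `u` is `B`-orthogonal to `W_h` and `v` is `⟨·,·⟩`-orthogonal to `W_h`,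
then `‖u - v‖ ≤ √(c₂/c₁)·(‖Q(P u) - P u‖ + ‖P v - v‖)`. -/
theorem vanishing_gap_estimate
    {H : Type*} [NormedAddCommGroup H] [InnerProductSpace ℝ H] [CompleteSpace H]
    (H₀ : Submodule ℝ H) [FiniteDimensional ℝ H₀]
    (B : H₀ →ₗ[ℝ] H₀ →ₗ[ℝ] ℝ)
    (hsymm : ∀ x y : H₀, B x y = B y x)
    {c₁ c₂ : ℝ} (hc₁ : 0 < c₁) (hc₂ : 0 < c₂)
    (hlow : ∀ x : H₀, c₁ * ‖(x : H)‖ ^ 2 ≤ B x x)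
    (hup : ∀ x : H₀, B x x ≤ c₂ * ‖(x : H)‖ ^ 2)
    (Q : H → H₀)
    (hQ : ∀ (t : H) (t' : H₀), B (Q t) t' = ⟪t, (t' : H)⟫)
    (W : Submodule ℝ H) (hW : IsClosed (W : Set H))
    (W_h : Submodule ℝ H) (hWh : W_h ≤ W ⊓ H₀)
    (u v : H₀) (pu pv : H)
    (hpu : pu ∈ Wᗮ) (hupu : (u : H) - pu ∈ W)
    (hpv : pv ∈ Wᗮ) (hvpv : (v : H) - pv ∈ W)
    (huv : (u : H) - (v : H) ∈ W_h)
    (hBu : ∀ w : H₀, (w : H) ∈ W_h → B u w = 0)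
    (hv : ∀ w ∈ W_h, ⟪(v : H), w⟫ = 0) :
    ‖(u : H) - (v : H)‖ ≤
      Real.sqrt (c₂ / c₁) * (‖((Q pu : H₀) : H) - pu‖ + ‖pv - (v : H)‖) := by
  set e : H₀ := u - v with he
  have hecoe : (e : H) = (u : H) - (v : H) := rfl
  have heWh : (e : H) ∈ W_h := by rw [hecoe]; exact huv
  have heW : (e : H) ∈ W := (hWh heWh).1
  -- pu = pv
  have hpupv : pu = pv := by
    have h1 : pu - pv ∈ W := by
      have h := W.sub_mem ((hWh huv).1) (W.sub_mem hupu hvpv)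
      have heq : (u : H) - (v : H) - (((u : H) - pu) - ((v : H) - pv)) = pu - pv := by
        abel
      rwa [heq] at h
    have h2 : pu - pv ∈ Wᗮ := Submodule.sub_mem _ hpu hpv
    have h3 : ⟪pu - pv, pu - pv⟫ = 0 :=
      (Submodule.mem_orthogonal' W (pu - pv)).mp h2 (pu - pv) h1
    exact sub_eq_zero.mp (inner_self_eq_zero.mp h3)
  set z : H₀ := Q pu - v with hz
  have key1 : B u e = 0 := hBu e heWh
  have key2 : B (Q pu) e = 0 := by
    rw [hQ]
    exact (Submodule.mem_orthogonal' W pu).mp hpu (e : H) heW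
  have hlin : ∀ y : H₀, B e y = B u y - B v y := fun y => by
    rw [he, map_sub, LinearMap.sub_apply]
  have hlinz : ∀ y : H₀, B z y = B (Q pu) y - B v y := fun y => by
    rw [hz, map_sub, LinearMap.sub_apply]
  have hBe : B e e = -(B v e) := by rw [hlin, key1]; ring
  have hBze : B z e = B e e := by rw [hlinz, key2, hBe]; ring
  have hBez : B e z = B e e := by rw [hsymm, hBze]
  have hpos : (0 : ℝ) ≤ B (e - z) (e - z) := by
    refine le_trans ?_ (hlow (e - z))
    positivity
  have hexp : B (e - z) (e - z) = B z z - B e e := by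
    have h1 : ∀ y : H₀, B (e - z) y = B e y - B z y := fun y => by
      rw [map_sub, LinearMap.sub_apply]
    rw [h1 (e - z), map_sub (B e) e z, map_sub (B z) e z, hBez, hBze]
    ring
  have hBle : B e e ≤ B z z := by rw [hexp] at hpos; linarith
  have hchain : c₁ * ‖(e : H)‖ ^ 2 ≤ c₂ * ‖(z : H)‖ ^ 2 :=
    le_trans (hlow e) (le_trans hBle (hup z))
  have hsq : ‖(e : H)‖ ^ 2 ≤ (c₂ / c₁) * ‖(z : H)‖ ^ 2 := by
    rw [div_mul_eq_mul_div, le_div_iff₀ hc₁]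
    nlinarith
  have hnorm : ‖(e : H)‖ ≤ Real.sqrt (c₂ / c₁) * ‖(z : H)‖ := by
    have h1 : ‖(e : H)‖ = Real.sqrt (‖(e : H)‖ ^ 2) := by
      rw [Real.sqrt_sq (norm_nonneg _)]
    rw [h1]
    calc Real.sqrt (‖(e : H)‖ ^ 2) ≤ Real.sqrt ((c₂ / c₁) * ‖(z : H)‖ ^ 2) :=
          Real.sqrt_le_sqrt hsq
      _ = Real.sqrt (c₂ / c₁) * ‖(z : H)‖ := by
          rw [Real.sqrt_mul (by positivity), Real.sqrt_sq (norm_nonneg _)]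
  have hzcoe : (z : H) = ((Q pu : H₀) : H) - (v : H) := rfl
  have hzb : ‖(z : H)‖ ≤ ‖((Q pu : H₀) : H) - pu‖ + ‖pv - (v : H)‖ := by
    rw [hzcoe]
    calc ‖((Q pu : H₀) : H) - (v : H)‖
        = ‖(((Q pu : H₀) : H) - pu) + (pv - (v : H))‖ := by rw [hpupv]; congr 1; abel
      _ ≤ ‖((Q pu : H₀) : H) - pu‖ + ‖pv - (v : H)‖ := norm_add_le _ _
  calc ‖(u : H) - (v : H)‖ = ‖(e : H)‖ := by rw [hecoe]
    _ ≤ Real.sqrt (c₂ / c₁) * ‖(z : H)‖ := hnorm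
    _ ≤ Real.sqrt (c₂ / c₁) * (‖((Q pu : H₀) : H) - pu‖ + ‖pv - (v : H)‖) :=
        mul_le_mul_of_nonneg_left hzb (Real.sqrt_nonneg _)
end
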